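/- Let (Ω, 𝓕, P) be a probability space, let ε_t > 0 be a given error tolerance, let ℓ ≥ 1, N ≥ 1, let U_1, …, U_N be fixed nonzero ℓ×ℓ real matrices, and let Ũ_1, …, Ũ_N : Ω → M_ℓ(ℝ) be independent measurable random matrices with finite second-moment norms. Suppose the machine epsilon satisfies ε_m ≤ ε_t / (N √(e·ℓ)) and that for every p: (i) E[(‖U_p − Ũ_p‖/‖U_p‖)²] ≤ ℓ ε_m², and (ii) E[(‖Ũ_p‖/‖U_p‖)²] ≤ 1 + 1/N. Then the relative error ε := ‖U_N ⋯ U_1 − Ũ_N ⋯ Ũ_1‖ / (∏_{p=1}^{N} ‖U_p‖) satisfies σ(ε) ≤ ε_t. -/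

import Mathlib

/-!
Telescoping, `U_N ⋯ U_1 - Ũ_N ⋯ Ũ_1 = ∑_p Ũ_N ⋯ Ũ_{p+1} (U_p - Ũ_p) U_{p-1} ⋯ U_1`, bounds the
relative error pointwise by `∑_p X_p` with `X_p = (∏_{q > p} ‖Ũ_q‖ / ‖U_q‖) · ‖U_p - Ũ_p‖ / ‖U_p‖`.
By independence `E[X_p²]` factors as `E[(‖U_p - Ũ_p‖ / ‖U_p‖)²] · ∏_{q > p} E[(‖Ũ_q‖ / ‖U_q‖)²]`,
which is at most `ℓ ε_m² (1 + 1/N)^N ≤ e ℓ ε_m²`. Since `(∑_p X_p)² ≤ N ∑_p X_p²`, this gives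
`σ(ε)² ≤ E[ε²] ≤ N² e ℓ ε_m² ≤ ε_t²`.
-/

open MeasureTheory ProbabilityTheory
open scoped Matrix.Norms.L2Operator

/-- Matrices inherit the product measurable-space structure (entrywise). -/
instance matrixMeasurableSpace {l : ℕ} : MeasurableSpace (Matrix (Fin l) (Fin l) ℝ) :=
  inferInstanceAs (MeasurableSpace ((Fin l) → (Fin l) → ℝ))

/-- The ordered product `U_{n} U_{n-1} ⋯ U_1` of matrices (written with 0-based
indices), where the factor with the largest index acts last (leftmost). -/
noncomputable def mprod {l : ℕ} (U : ℕ → Matrix (Fin l) (Fin l) ℝ) :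
    ℕ → Matrix (Fin l) (Fin l) ℝ
  | 0 => 1
  | n + 1 => U n * mprod U n

open Finset

section Matrix

variable {l : ℕ}

-- The L2 operator norm induces the entrywise topology, whose Borel σ-algebra is the entrywise one.
instance matrixBorelSpace : BorelSpace (Matrix (Fin l) (Fin l) ℝ) :=
  inferInstanceAs (BorelSpace (Fin l → Fin l → ℝ))

instance matrixSecondCountableTopology : SecondCountableTopology (Matrix (Fin l) (Fin l) ℝ) :=
  inferInstanceAs (SecondCountableTopology (Fin l → Fin l → ℝ))

lemma norm_one_matrix_le : ‖(1 : Matrix (Fin l) (Fin l) ℝ)‖ ≤ 1 := by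
  rw [Matrix.cstar_norm_def, map_one]
  exact ContinuousLinearMap.norm_id_le

lemma norm_mprod_le (U : ℕ → Matrix (Fin l) (Fin l) ℝ) :
    ∀ n, ‖mprod U n‖ ≤ ∏ q ∈ range n, ‖U q‖
  | 0 => by simpa [mprod] using norm_one_matrix_le
  | n + 1 => by
      rw [prod_range_succ, mul_comm]
      exact (norm_mul_le _ _).trans (by gcongr; exact norm_mprod_le U n)

lemma mprod_succ_sub_mprod_succ (U W : ℕ → Matrix (Fin l) (Fin l) ℝ) (n : ℕ) :
    mprod U (n + 1) - mprod W (n + 1) =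
      (U n - W n) * mprod U n + W n * (mprod U n - mprod W n) := by
  simp only [mprod, sub_mul, mul_sub]
  abel

lemma norm_mprod_sub_mprod_le (U W : ℕ → Matrix (Fin l) (Fin l) ℝ) :
    ∀ n, ‖mprod U n - mprod W n‖ ≤
      ∑ p ∈ range n, (∏ q ∈ Ico (p + 1) n, ‖W q‖) * ‖U p - W p‖ * ∏ q ∈ range p, ‖U q‖
  | 0 => by simp [mprod]
  | n + 1 => by
      have hsum : ∑ p ∈ range (n + 1),
          (∏ q ∈ Ico (p + 1) (n + 1), ‖W q‖) * ‖U p - W p‖ * ∏ q ∈ range p, ‖U q‖ =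
          ‖U n - W n‖ * ∏ q ∈ range n, ‖U q‖ + ‖W n‖ * ∑ p ∈ range n,
            (∏ q ∈ Ico (p + 1) n, ‖W q‖) * ‖U p - W p‖ * ∏ q ∈ range p, ‖U q‖ := by
        rw [sum_range_succ, Ico_self, prod_empty, one_mul, add_comm, mul_sum]
        congr 1
        refine sum_congr rfl fun p hp => ?_
        rw [prod_Ico_succ_top (mem_range.1 hp)]
        ring
      rw [mprod_succ_sub_mprod_succ, hsum]
      refine (norm_add_le _ _).trans (add_le_add ?_ ?_)
      · exact (norm_mul_le _ _).trans (by gcongr; exact norm_mprod_le U n)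
      · exact (norm_mul_le _ _).trans (by gcongr; exact norm_mprod_sub_mprod_le U W n)

lemma norm_mprod_sub_mprod_div_le {U : ℕ → Matrix (Fin l) (Fin l) ℝ} {n : ℕ}
    (hU : ∀ p < n, U p ≠ 0) (W : ℕ → Matrix (Fin l) (Fin l) ℝ) :
    ‖mprod U n - mprod W n‖ / ∏ q ∈ range n, ‖U q‖ ≤
      ∑ p ∈ range n, (∏ q ∈ Ico (p + 1) n, ‖W q‖ / ‖U q‖) * (‖U p - W p‖ / ‖U p‖) := by
  have hpos : ∀ q < n, 0 < ‖U q‖ := fun q hq => norm_pos_iff.2 (hU q hq)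
  refine (div_le_div_of_nonneg_right (norm_mprod_sub_mprod_le U W n) ?_).trans_eq ?_
  · exact prod_nonneg fun q _ => norm_nonneg _
  rw [sum_div]
  refine sum_congr rfl fun p hp => ?_
  have hp : p < n := mem_range.1 hp
  have hsplit : ∏ q ∈ range n, ‖U q‖ =
      (∏ q ∈ Ico (p + 1) n, ‖U q‖) * ‖U p‖ * ∏ q ∈ range p, ‖U q‖ := by
    rw [← prod_range_mul_prod_Ico _ hp, prod_range_succ]
    ring
  have hUp := (hpos p hp).ne'
  have hUIco : ∏ q ∈ Ico (p + 1) n, ‖U q‖ ≠ 0 :=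
    (prod_pos fun q hq => hpos q (mem_Ico.1 hq).2).ne'
  have hUrange : ∏ q ∈ range p, ‖U q‖ ≠ 0 :=
    (prod_pos fun q hq => hpos q ((mem_range.1 hq).trans hp)).ne'
  rw [hsplit, prod_div_distrib]
  field_simp

lemma measurable_mprod {Ω : Type*} [MeasurableSpace Ω] {V : ℕ → Ω → Matrix (Fin l) (Fin l) ℝ} :
    ∀ n, (∀ p < n, Measurable (V p)) → Measurable fun ω => mprod (fun p => V p ω) n
  | 0, _ => measurable_const
  | n + 1, hV => (hV n n.lt_succ_self).mul
      (measurable_mprod n fun p hp => hV p (hp.trans n.lt_succ_self))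

end Matrix

namespace ProbabilityTheory

variable {Ω : Type*} [MeasurableSpace Ω] {μ : Measure Ω}

lemma iIndepFun.integrable_fun_prod_comp {ι 𝕜 : Type*} [Fintype ι] [NormedCommRing 𝕜]
    {𝓧 : ι → Type*} {m𝓧 : ∀ i, MeasurableSpace (𝓧 i)} {X : (i : ι) → Ω → 𝓧 i}
    {f : (i : ι) → 𝓧 i → 𝕜} (hX : iIndepFun X μ) (mX : ∀ i, AEMeasurable (X i) μ)
    (hf : ∀ i, Integrable (f i) (μ.map (X i))) :
    Integrable (fun ω => ∏ i, f i (X i ω)) μ := by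
  have := hX.isProbabilityMeasure
  change Integrable ((fun x => ∏ i, f i (x i)) ∘ (fun ω => (X · ω))) μ
  have hpi := Integrable.fintype_prod_dep hf
  rw [← hX.map_fun_eq_pi_map mX] at hpi
  exact (integrable_map_measure hpi.aestronglyMeasurable (aemeasurable_pi_lambda _ mX)).1 hpi

variable [IsProbabilityMeasure μ] {E : Type*} [MeasurableSpace E] {N : ℕ} {V : ℕ → Ω → E}

lemma iIndepFun.integrable_and_integral_finset_prod
    (hV : iIndepFun (fun i : Fin N => V i) μ) (hVm : ∀ i < N, Measurable (V i))
    {f : ℕ → E → ℝ} (hf : ∀ i < N, Measurable (f i)) {s : Finset ℕ} (hs : s ⊆ range N)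
    (hfs : ∀ i ∈ s, Integrable (fun ω => f i (V i ω)) μ) :
    Integrable (fun ω => ∏ i ∈ s, f i (V i ω)) μ ∧
      ∫ ω, ∏ i ∈ s, f i (V i ω) ∂μ = ∏ i ∈ s, ∫ ω, f i (V i ω) ∂μ := by
  classical
  have hrestrict : ∀ F : ℕ → ℝ, ∏ i : Fin N, (if (i : ℕ) ∈ s then F i else 1) = ∏ i ∈ s, F i :=
    fun F => by
      rw [Fin.prod_univ_eq_prod_range (fun i => if i ∈ s then F i else 1), prod_ite_mem,
        inter_eq_right.2 hs]
  set g : Fin N → E → ℝ := fun i x => if (i : ℕ) ∈ s then f i x else 1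
  have hgV : ∀ i, Integrable (fun ω => g i (V i ω)) μ := fun i => by
    by_cases hi : (i : ℕ) ∈ s
    · simpa [g, hi] using hfs i hi
    · simp [g, hi]
  have hVm' : ∀ i : Fin N, AEMeasurable (V i) μ := fun i => (hVm i i.isLt).aemeasurable
  have hgm : ∀ i : Fin N, Measurable (g i) := fun i => by
    by_cases hi : (i : ℕ) ∈ s
    · simpa [g, hi] using hf i i.isLt
    · simp [g, hi]
  constructor
  · simp_rw [← hrestrict]
    refine hV.integrable_fun_prod_comp (f := g) hVm' fun i => ?_
    exact (integrable_map_measure (hgm i).aestronglyMeasurable (hVm' i)).2 (hgV i)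
  · have hint : ∀ i : Fin N, ∫ ω, g i (V i ω) ∂μ =
        if (i : ℕ) ∈ s then ∫ ω, f i (V i ω) ∂μ else 1 := fun i => by
      by_cases hi : (i : ℕ) ∈ s <;> simp [g, hi]
    simp_rw [← hrestrict, ← hint]
    exact hV.integral_fun_prod_comp hVm' fun i => (hgm i).aestronglyMeasurable

end ProbabilityTheory

section Moments

variable {Ω : Type*} [MeasurableSpace Ω] {P : Measure Ω}

lemma integrable_sq_norm_div {F : Type*} [NormedAddCommGroup F] {f : Ω → F} (hf : MemLp f 2 P)
    (c : ℝ) : Integrable (fun ω => (‖f ω‖ / c) ^ 2) P := by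
  have h := hf.norm.mul_const c⁻¹
  simp_rw [← div_eq_mul_inv] at h
  exact (memLp_two_iff_integrable_sq h.1).1 h

lemma integral_sq_le_of_le_sum {ι : Type*} {s : Finset ι} {ε : Ω → ℝ} {X : ι → Ω → ℝ} {B : ℝ}
    (hε : ∀ ω, 0 ≤ ε ω) (hεX : ∀ ω, ε ω ≤ ∑ p ∈ s, X p ω)
    (hX : ∀ p ∈ s, Integrable (fun ω => X p ω ^ 2) P) (hB : ∀ p ∈ s, ∫ ω, X p ω ^ 2 ∂P ≤ B) :
    ∫ ω, ε ω ^ 2 ∂P ≤ #s ^ 2 * B := by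
  have hpoint : ∀ ω, ε ω ^ 2 ≤ #s * ∑ p ∈ s, X p ω ^ 2 := fun ω =>
    (pow_le_pow_left₀ (hε ω) (hεX ω) 2).trans (sq_sum_le_card_mul_sum_sq ..)
  calc ∫ ω, ε ω ^ 2 ∂P ≤ ∫ ω, #s * ∑ p ∈ s, X p ω ^ 2 ∂P :=
        integral_mono_of_nonneg (ae_of_all _ fun ω => sq_nonneg _)
          ((integrable_finsetSum s hX).const_mul _) (ae_of_all _ hpoint)
    _ = #s * ∑ p ∈ s, ∫ ω, X p ω ^ 2 ∂P := by rw [integral_const_mul, integral_finsetSum s hX]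
    _ ≤ #s * ∑ _p ∈ s, B := by gcongr with p hp; exact hB p hp
    _ = #s ^ 2 * B := by rw [sum_const, nsmul_eq_mul]; ring

end Moments

lemma prod_le_exp_one {ι : Type*} {s : Finset ι} {a : ι → ℝ} {N : ℕ} (hs : #s ≤ N)
    (ha₀ : ∀ i ∈ s, 0 ≤ a i) (ha : ∀ i ∈ s, a i ≤ 1 + 1 / (N : ℝ)) :
    ∏ i ∈ s, a i ≤ Real.exp 1 := by
  have hone : (1 : ℝ) ≤ 1 + 1 / N := le_add_of_nonneg_right (by positivity)
  calc ∏ i ∈ s, a i ≤ ∏ _i ∈ s, (1 + 1 / (N : ℝ)) := prod_le_prod ha₀ ha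
    _ = (1 + 1 / (N : ℝ)) ^ #s := prod_const _
    _ ≤ (1 + 1 / (N : ℝ)) ^ N := pow_le_pow_right₀ hone hs
    _ ≤ Real.exp (1 / N) ^ N := by
        gcongr
        linarith [Real.add_one_le_exp (1 / (N : ℝ))]
    _ = Real.exp (N * (1 / N)) := (Real.exp_nat_mul _ N).symm
    _ ≤ Real.exp 1 := by
        gcongr
        rcases N.eq_zero_or_pos with rfl | hN
        · simp
        · exact (mul_one_div_cancel (Nat.cast_ne_zero.2 hN.ne')).le

lemma integrable_and_integral_sq_telescope_term {Ω E : Type*} [MeasurableSpace Ω] {P : Measure Ω}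
    [IsProbabilityMeasure P] [NormedAddCommGroup E] [MeasurableSpace E] [OpensMeasurableSpace E]
    {N p : ℕ} (hp : p < N) (U : ℕ → E) {V : ℕ → Ω → E}
    (hindep : iIndepFun (fun i : Fin N => V i) P) (hVmeas : ∀ i < N, Measurable (V i))
    (hV : ∀ i < N, MemLp (V i) 2 P) :
    Integrable (fun ω => ((∏ q ∈ Ico (p + 1) N, ‖V q ω‖ / ‖U q‖) * (‖U p - V p ω‖ / ‖U p‖)) ^ 2) P ∧
      ∫ ω, ((∏ q ∈ Ico (p + 1) N, ‖V q ω‖ / ‖U q‖) * (‖U p - V p ω‖ / ‖U p‖)) ^ 2 ∂P =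
        (∫ ω, (‖U p - V p ω‖ / ‖U p‖) ^ 2 ∂P) *
          ∏ q ∈ Ico (p + 1) N, ∫ ω, (‖V q ω‖ / ‖U q‖) ^ 2 ∂P := by
  -- The squared term is `∏_{i ∈ [p, N)} f i (V i)`, a product of functions of independent variables.
  set f : ℕ → E → ℝ := Function.update (fun q M => (‖M‖ / ‖U q‖) ^ 2) p
    (fun M => (‖U p - M‖ / ‖U p‖) ^ 2)
  have hf_of_ne : ∀ q ∈ Ico (p + 1) N, f q = fun M => (‖M‖ / ‖U q‖) ^ 2 := fun q hq =>
    Function.update_of_ne (by have := (mem_Ico.1 hq).1; omega) _ _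
  have hfm : ∀ i < N, Measurable (f i) := fun i _ => by
    rcases eq_or_ne i p with rfl | hi
    · simpa only [f, Function.update_self] using (by fun_prop : Continuous _).measurable
    · simpa only [f, Function.update_of_ne hi] using (by fun_prop : Continuous _).measurable
  have hfi : ∀ i ∈ Ico p N, Integrable (fun ω => f i (V i ω)) P := fun i hi => by
    have hiN := (mem_Ico.1 hi).2
    rcases eq_or_ne i p with rfl | hip
    · simpa [f] using integrable_sq_norm_div ((memLp_const (U i)).sub (hV i hiN)) ‖U i‖
    · simpa [f, Function.update_of_ne hip] using integrable_sq_norm_div (hV i hiN) ‖U i‖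
  have hs : Ico p N ⊆ range N := by
    rw [range_eq_Ico]
    exact Ico_subset_Ico_left (Nat.zero_le p)
  obtain ⟨hint, heq⟩ := hindep.integrable_and_integral_finset_prod hVmeas hfm hs hfi
  have hsplit : ∀ F : ℕ → ℝ, ∏ i ∈ Ico p N, F i = F p * ∏ i ∈ Ico (p + 1) N, F i :=
    prod_eq_prod_Ico_succ_bot hp
  have hsq : ∀ ω, ((∏ q ∈ Ico (p + 1) N, ‖V q ω‖ / ‖U q‖) * (‖U p - V p ω‖ / ‖U p‖)) ^ 2 =
      ∏ i ∈ Ico p N, f i (V i ω) := fun ω => by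
    rw [hsplit, prod_congr rfl fun q hq => congrFun (hf_of_ne q hq) (V q ω), mul_pow, prod_pow,
      mul_comm]
    simp [f]
  simp_rw [hsq]
  refine ⟨hint, ?_⟩
  rw [heq, hsplit, prod_congr rfl fun q hq => by rw [hf_of_ne q hq]]
  simp [f]

theorem tolerance_random_product_error_general {Ω : Type*} [MeasurableSpace Ω]
    (P : Measure Ω) [IsProbabilityMeasure P]
    {l N : ℕ} (εt : ℝ) (hεt : 0 < εt)
    (εm : ℝ) (hεm : 0 ≤ εm)
    (hεm_le : εm ≤ εt / ((N : ℝ) * Real.sqrt (Real.exp 1 * l)))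
    (U : ℕ → Matrix (Fin l) (Fin l) ℝ) (hU : ∀ p < N, U p ≠ 0)
    (V : ℕ → Ω → Matrix (Fin l) (Fin l) ℝ)
    (hVmeas : ∀ p < N, Measurable (V p))
    (hVL2 : ∀ p < N, MemLp (fun ω => ‖V p ω‖) 2 P)
    (hindep : iIndepFun (m := fun _ : Fin N => inferInstance) (fun p : Fin N => V p.1) P)
    (herr : ∀ p < N, ∫ ω, (‖U p - V p ω‖ / ‖U p‖) ^ 2 ∂P ≤ (l : ℝ) * εm ^ 2)
    (hnorm : ∀ p < N, ∫ ω, (‖V p ω‖ / ‖U p‖) ^ 2 ∂P ≤ 1 + 1 / (N : ℝ)) :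
    Real.sqrt (variance
        (fun ω => ‖mprod U N - mprod (fun p => V p ω) N‖ / ∏ p ∈ Finset.range N, ‖U p‖) P) ≤
      εt := by
  set ε := fun ω => ‖mprod U N - mprod (fun p => V p ω) N‖ / ∏ p ∈ range N, ‖U p‖
  set X := fun p ω => (∏ q ∈ Ico (p + 1) N, ‖V q ω‖ / ‖U q‖) * (‖U p - V p ω‖ / ‖U p‖)
  have hV : ∀ p < N, MemLp (V p) 2 P := fun p hp =>
    (memLp_norm_iff (hVmeas p hp).aestronglyMeasurable).1 (hVL2 p hp)
  have hX : ∀ p ∈ range N, Integrable (fun ω => X p ω ^ 2) P ∧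
      ∫ ω, X p ω ^ 2 ∂P ≤ l * εm ^ 2 * Real.exp 1 := fun p hp => by
    have hp := mem_range.1 hp
    obtain ⟨hint, heq⟩ := integrable_and_integral_sq_telescope_term hp U hindep hVmeas hV
    refine ⟨hint, heq.trans_le (mul_le_mul (herr p hp) ?_ ?_ (by positivity))⟩
    · exact prod_le_exp_one (by simp) (fun q _ => integral_nonneg fun _ => sq_nonneg _)
        fun q hq => hnorm q (mem_Ico.1 hq).2
    · exact prod_nonneg fun q _ => integral_nonneg fun _ => sq_nonneg _
  have hmoment : ∫ ω, ε ω ^ 2 ∂P ≤ N ^ 2 * (l * εm ^ 2 * Real.exp 1) := by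
    simpa using integral_sq_le_of_le_sum (fun ω => by positivity)
      (fun ω => norm_mprod_sub_mprod_div_le hU _) (fun p hp => (hX p hp).1) fun p hp => (hX p hp).2
  have hbound : N ^ 2 * (l * εm ^ 2 * Real.exp 1) ≤ εt ^ 2 := by
    have hc : 0 ≤ (N : ℝ) * Real.sqrt (Real.exp 1 * l) := by positivity
    calc N ^ 2 * (l * εm ^ 2 * Real.exp 1) = (εm * (N * Real.sqrt (Real.exp 1 * l))) ^ 2 := by
          rw [mul_pow, mul_pow, Real.sq_sqrt (by positivity)]
          ring
      _ ≤ εt ^ 2 := by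
          gcongr
          exact mul_le_of_le_div₀ hεt.le hc hεm_le
  have hε : Measurable ε := ((measurable_mprod N hVmeas).const_sub _).norm.div_const _
  calc Real.sqrt (variance ε P) ≤ Real.sqrt (∫ ω, ε ω ^ 2 ∂P) :=
        Real.sqrt_le_sqrt (variance_le_expectation_sq hε.aestronglyMeasurable)
    _ ≤ Real.sqrt (εt ^ 2) := Real.sqrt_le_sqrt (hmoment.trans hbound)
    _ = εt := Real.sqrt_sq hεt.le

/-- On a probability space `(Ω, 𝓕, P)`, with error tolerance `ε_t > 0`,
`ℓ ≥ 1`, `N ≥ 1`, fixed nonzero `ℓ×ℓ` real matrices `U_1, …, U_N`, and independent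
measurable random matrices `Ũ_1, …, Ũ_N : Ω → M_ℓ(ℝ)` whose spectral norms have finite
second moments, suppose the machine epsilon satisfies `ε_m ≤ ε_t / (N √(e·ℓ))` and for
every `p`: (i) `E[(‖U_p − Ũ_p‖/‖U_p‖)²] ≤ ℓ ε_m²`, and (ii) `E[(‖Ũ_p‖/‖U_p‖)²] ≤ 1 + 1/N`.
Then the relative error `ε := ‖U_N ⋯ U_1 − Ũ_N ⋯ Ũ_1‖ / ∏_p ‖U_p‖` satisfies
`σ(ε) ≤ ε_t`. -/
theorem tolerance_random_product_error {Ω : Type*} [MeasurableSpace Ω]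
    (P : Measure Ω) [IsProbabilityMeasure P]
    {l N : ℕ} (hl : 1 ≤ l) (hN : 1 ≤ N) (εt : ℝ) (hεt : 0 < εt)
    (εm : ℝ) (hεm : 0 ≤ εm)
    (hεm_le : εm ≤ εt / ((N : ℝ) * Real.sqrt (Real.exp 1 * l)))
    (U : ℕ → Matrix (Fin l) (Fin l) ℝ) (hU : ∀ p < N, U p ≠ 0)
    (V : ℕ → Ω → Matrix (Fin l) (Fin l) ℝ)
    (hVmeas : ∀ p < N, Measurable (V p))
    (hVL2 : ∀ p < N, MemLp (fun ω => ‖V p ω‖) 2 P)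
    (hindep : iIndepFun (m := fun _ : Fin N => inferInstance) (fun p : Fin N => V p.1) P)
    (herr : ∀ p < N, ∫ ω, (‖U p - V p ω‖ / ‖U p‖) ^ 2 ∂P ≤ (l : ℝ) * εm ^ 2)
    (hnorm : ∀ p < N, ∫ ω, (‖V p ω‖ / ‖U p‖) ^ 2 ∂P ≤ 1 + 1 / (N : ℝ)) :
    Real.sqrt (variance
        (fun ω => ‖mprod U N - mprod (fun p => V p ω) N‖ / ∏ p ∈ Finset.range N, ‖U p‖) P) ≤
      εt :=
  tolerance_random_product_error_general P εt hεt εm hεm hεm_le U hU V hVmeas hVL2 hindep herr hnorm
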